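/- If the static dependency graph of a set of transaction templates contains no RW edge at all, then every runtime schedule under read committed is serializable. -/
import Mathlib

inductive Lbl | WW | WR | RW
deriving DecidableEq

/-- If the static dependency graph contains no RW edge at all, then under
read-committed semantics (every WW/WR runtime edge satisfies
commit(Tᵢ) < commit(Tⱼ)) every runtime schedule is serializable: the runtime
dependency graph, which maps label-preservingly to the static graph, is
acyclic. -/
theorem stmt_6 {Tmpl V : Type*}
    (S : Tmpl → Tmpl → Lbl → Prop)
    (hnoRW : ∀ u v : Tmpl, ¬ S u v Lbl.RW)
    (tmpl : V → Tmpl) (E : V → V → Lbl → Prop)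
    (hhom : ∀ i j l, E i j l → S (tmpl i) (tmpl j) l)
    (commit : V → ℝ)
    (hOther : ∀ i j l, E i j l → l ≠ Lbl.RW → commit i < commit j) :
    ∀ (n : ℕ), 0 < n → ∀ (f : ZMod n → V) (lbl : ZMod n → Lbl),
      (∀ i : ZMod n, E (f i) (f (i + 1)) (lbl i)) → False := by
  intro n hn f lbl hE
  haveI : NeZero n := ⟨hn.ne'⟩
  have key : ∀ i : ZMod n, commit (f i) < commit (f (i + 1)) := by
    intro i
    have h := hE i
    cases hl : lbl i with
    | RW =>
        rw [hl] at h
        exact absurd (hhom _ _ _ h) (hnoRW _ _)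
    | WW => exact hOther _ _ _ h (by simp [hl])
    | WR => exact hOther _ _ _ h (by simp [hl])
  obtain ⟨i, hi⟩ := Finite.exists_max (fun i : ZMod n => commit (f i))
  exact absurd (key i) (not_lt.2 (hi (i + 1)))
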